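/- Let q, q_d, ω, ω_d ∈ ℝ³ with ‖q‖ = ‖q_d‖ = 1, q·ω = 0, q_d·ω_d = 0. Define Ψ = 1 − q·q_d, e_q = q_d × q, e_ω = ω + q̂²ω_d, and for constants k_q, c_q > 0 the Lyapunov function V_q = (1/2)‖e_ω‖² + c_q (e_ω·e_q) + k_q Ψ. Then (i) V_q ≥ (k_q/2)‖e_q‖² − c_q ‖e_q‖‖e_ω‖ + (1/2)‖e_ω‖², and (ii) for any constant 0 < ψ_q < 2, if Ψ < ψ_q then V_q ≤ (k_q/(2 − ψ_q))‖e_q‖² + c_q ‖e_q‖‖e_ω‖ + (1/2)‖e_ω‖². -/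

import Mathlib

noncomputable section

open scoped BigOperators

/-- ℝ³ as `Fin 3 → ℝ`. -/
abbrev V3 : Type := Fin 3 → ℝ

/-- Euclidean inner product on ℝ³. -/
def dot3 (a b : V3) : ℝ := ∑ i, a i * b i

/-- Euclidean norm on ℝ³. -/
def norm3 (a : V3) : ℝ := Real.sqrt (dot3 a a)

/-- Cross product on ℝ³. -/
def cross3 (a b : V3) : V3 :=
  ![a 1 * b 2 - a 2 * b 1, a 2 * b 0 - a 0 * b 2, a 0 * b 1 - a 1 * b 0]

/-- The third standard basis vector. -/
def e3 : V3 := ![0, 0, 1]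

/-!
Write `Ψ = 1 - q·q_d`. For unit vectors Lagrange's identity gives
`‖e_q‖² = 1 - (q·q_d)² = Ψ (2 - Ψ)`, and Cauchy–Schwarz gives `Ψ ≥ 0` and
`|e_ω·e_q| ≤ ‖e_q‖‖e_ω‖`. The cross term of `V_q` is thus squeezed between `∓ c_q ‖e_q‖‖e_ω‖`,
and the potential term `k_q Ψ` between `(k_q/2) Ψ(2 - Ψ)` (the gap is `k_q Ψ²/2`) and
`k_q Ψ(2 - Ψ)/(2 - ψ_q)`, which exceeds it as soon as `2 - Ψ ≥ 2 - ψ_q > 0`.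
-/

section Vectors

variable (a b c d : V3)

theorem dot3_eq_inner :
    dot3 a b = inner ℝ (WithLp.toLp 2 a : EuclideanSpace ℝ (Fin 3)) (WithLp.toLp 2 b) := by
  rw [EuclideanSpace.inner_toLp_toLp, star_trivial, dotProduct_comm]
  rfl

theorem norm3_eq_norm : norm3 a = ‖(WithLp.toLp 2 a : EuclideanSpace ℝ (Fin 3))‖ := by
  rw [norm_eq_sqrt_real_inner, ← dot3_eq_inner, norm3]

theorem norm3_sq : norm3 a ^ 2 = dot3 a a := by
  rw [norm3_eq_norm, dot3_eq_inner, real_inner_self_eq_norm_sq]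

theorem abs_dot3_le_norm3_mul_norm3 : |dot3 a b| ≤ norm3 a * norm3 b := by
  rw [dot3_eq_inner, norm3_eq_norm, norm3_eq_norm]
  exact abs_real_inner_le_norm _ _

theorem dot3_comm : dot3 a b = dot3 b a := dotProduct_comm a b

theorem dot3_cross3_cross3 :
    dot3 (cross3 a b) (cross3 c d) = dot3 a c * dot3 b d - dot3 a d * dot3 b c :=
  cross_dot_cross a b c d

end Vectors

section UnitVectors

variable {q qd : V3}

theorem dot3_self_of_norm3_eq_one (hq : norm3 q = 1) : dot3 q q = 1 := by
  rw [← norm3_sq, hq, one_pow]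

theorem dot3_le_one_of_norm3_eq_one (hq : norm3 q = 1) (hqd : norm3 qd = 1) :
    dot3 q qd ≤ 1 := by
  simpa [hq, hqd] using (abs_dot3_le_norm3_mul_norm3 q qd).trans' (le_abs_self _)

theorem norm3_cross3_sq_of_norm3_eq_one (hq : norm3 q = 1) (hqd : norm3 qd = 1) :
    norm3 (cross3 qd q) ^ 2 = (1 - dot3 q qd) * (2 - (1 - dot3 q qd)) := by
  rw [norm3_sq, dot3_cross3_cross3, dot3_self_of_norm3_eq_one hq,
    dot3_self_of_norm3_eq_one hqd, dot3_comm qd q]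
  ring

end UnitVectors

section Potential

variable {k Ψ ψ : ℝ}

theorem half_mul_mul_two_sub_le (hk : 0 ≤ k) : k / 2 * (Ψ * (2 - Ψ)) ≤ k * Ψ := by
  nlinarith [mul_nonneg hk (sq_nonneg Ψ)]

theorem mul_le_div_mul_mul_two_sub (hk : 0 ≤ k) (hΨ : 0 ≤ Ψ) (hψ : ψ < 2) (hΨψ : Ψ ≤ ψ) :
    k * Ψ ≤ k / (2 - ψ) * (Ψ * (2 - Ψ)) := by
  have h2ψ : 0 < 2 - ψ := by linarith
  rw [div_mul_eq_mul_div, le_div_iff₀ h2ψ]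
  nlinarith [mul_nonneg (mul_nonneg hk hΨ) (sub_nonneg.2 hΨψ)]

end Potential

theorem lyapunov_sandwich_bounds_general (q qd ω ωd : V3)
    (hq : norm3 q = 1) (hqd : norm3 qd = 1)
    (kq cq : ℝ) (hkq : 0 < kq) (hcq : 0 < cq) :
    (kq / 2) * norm3 (cross3 qd q) ^ 2
        - cq * norm3 (cross3 qd q) * norm3 (ω + cross3 q (cross3 q ωd))
        + (1 / 2) * norm3 (ω + cross3 q (cross3 q ωd)) ^ 2
      ≤ (1 / 2) * norm3 (ω + cross3 q (cross3 q ωd)) ^ 2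
          + cq * dot3 (ω + cross3 q (cross3 q ωd)) (cross3 qd q)
          + kq * (1 - dot3 q qd) ∧
      ∀ ψq : ℝ, 0 < ψq → ψq < 2 → 1 - dot3 q qd < ψq →
        (1 / 2) * norm3 (ω + cross3 q (cross3 q ωd)) ^ 2
            + cq * dot3 (ω + cross3 q (cross3 q ωd)) (cross3 qd q)
            + kq * (1 - dot3 q qd)
          ≤ (kq / (2 - ψq)) * norm3 (cross3 qd q) ^ 2
              + cq * norm3 (cross3 qd q) * norm3 (ω + cross3 q (cross3 q ωd))
              + (1 / 2) * norm3 (ω + cross3 q (cross3 q ωd)) ^ 2 := by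
  set eq := cross3 qd q
  set eω := ω + cross3 q (cross3 q ωd)
  have hcross := abs_le.1 <| (abs_dot3_le_norm3_mul_norm3 eω eq).trans_eq (mul_comm _ _)
  have hcross_lower := mul_le_mul_of_nonneg_left hcross.1 hcq.le
  have hcross_upper := mul_le_mul_of_nonneg_left hcross.2 hcq.le
  have heq := norm3_cross3_sq_of_norm3_eq_one hq hqd
  have hΨ : 0 ≤ 1 - dot3 q qd := sub_nonneg.2 (dot3_le_one_of_norm3_eq_one hq hqd)
  refine ⟨?_, fun ψq _ hψq hΨψ => ?_⟩
  · have := half_mul_mul_two_sub_le (Ψ := 1 - dot3 q qd) hkq.le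
    rw [heq]
    linarith
  · have := mul_le_div_mul_mul_two_sub hkq.le hΨ hψq hΨψ.le
    rw [heq]
    linarith

/-- quadratic sandwich bounds for the Lyapunov function
`V_q = (1/2)‖e_ω‖² + c_q e_ω·e_q + k_q Ψ` used in the link-direction
tracking controller. -/
theorem lyapunov_sandwich_bounds (q qd ω ωd : V3)
    (hq : norm3 q = 1) (hqd : norm3 qd = 1)
    (hqω : dot3 q ω = 0) (hqdωd : dot3 qd ωd = 0)
    (kq cq : ℝ) (hkq : 0 < kq) (hcq : 0 < cq) :
    (kq / 2) * norm3 (cross3 qd q) ^ 2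
        - cq * norm3 (cross3 qd q) * norm3 (ω + cross3 q (cross3 q ωd))
        + (1 / 2) * norm3 (ω + cross3 q (cross3 q ωd)) ^ 2
      ≤ (1 / 2) * norm3 (ω + cross3 q (cross3 q ωd)) ^ 2
          + cq * dot3 (ω + cross3 q (cross3 q ωd)) (cross3 qd q)
          + kq * (1 - dot3 q qd) ∧
      ∀ ψq : ℝ, 0 < ψq → ψq < 2 → 1 - dot3 q qd < ψq →
        (1 / 2) * norm3 (ω + cross3 q (cross3 q ωd)) ^ 2
            + cq * dot3 (ω + cross3 q (cross3 q ωd)) (cross3 qd q)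
            + kq * (1 - dot3 q qd)
          ≤ (kq / (2 - ψq)) * norm3 (cross3 qd q) ^ 2
              + cq * norm3 (cross3 qd q) * norm3 (ω + cross3 q (cross3 q ωd))
              + (1 / 2) * norm3 (ω + cross3 q (cross3 q ωd)) ^ 2 :=
  lyapunov_sandwich_bounds_general q qd ω ωd hq hqd kq cq hkq hcq
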